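/- arXiv:2404.09073 — 3 statements merged into one kernel-verified Lean document; each statement's English description precedes it below -/
import Mathlib

section
/- If b_α/b_{g_i α} ≤ 1 for all i and all α ∈ F_n^+, then the associated weighted left creation operators W_1,...,W_n form a row contraction: W_1 W_1* + ⋯ + W_n W_n* ≤ I. Moreover, the completely positive map φ(X) = Σ_i W_i X W_i* satisfies φ^k(I) → 0 in the strong operator topology as k → ∞. -/
open scoped InnerProductSpace
open Filter

noncomputable section

/-- Words in the free semigroup `F_n^+`, encoded as lists over `Fin n`. -/
abbrev Word (n : ℕ) := List (Fin n)

/-- The full Fock space tensored with `K`, realized as `ℓ²`-sequences over words with values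
in `K`; for `K = ℂ` this is the full Fock space `F²(H_n)` with orthonormal basis `{e_α}`. -/
abbrev FockK (n : ℕ) (K : Type*) [NormedAddCommGroup K] [InnerProductSpace ℂ K] :=
  lp (fun _ : Word n => K) 2

/-- The finite set of words of length `p`. -/
def wordsLen (n p : ℕ) : Finset (Word n) :=
  (Finset.univ : Finset (List.Vector (Fin n) p)).image List.Vector.toList

variable {n : ℕ} {E : Type*} [NormedAddCommGroup E] [InnerProductSpace ℂ E] [CompleteSpace E]

/-- For a word `α = g_{i₁} ⋯ g_{i_k}`, the operator `X_α = X_{i₁} ⋯ X_{i_k}`. -/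
def wordOp (X : Fin n → (E →L[ℂ] E)) (α : Word n) : E →L[ℂ] E := (α.map X).prod

/-- Partial sums `∑_{p < N} ∑_{|α| = p} a_α X_α X_α^*` of the defect series
`Δ_{g⁻¹}(X, X^*)` associated with the coefficients `a` of `g⁻¹`. -/
def deltaPartial (a : Word n → ℝ) (X : Fin n → (E →L[ℂ] E)) (N : ℕ) : E →L[ℂ] E :=
  ∑ p ∈ Finset.range N, ∑ α ∈ wordsLen n p,
    (a α : ℂ) • (wordOp X α ∘L (wordOp X α).adjoint)

/-! Each `W i` is the weighted shift `e_β ↦ c i β • e_{g_i β}` with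
`c i β ^ 2 = b_β / b_{g_i β} ≤ 1`, so every iterate `φ^k(I)` is diagonal in the basis `{e_β}`:
its coefficient at `β` is the product of the squared weights met along the first `k`
letters of `β`, and `0` when `|β| < k`. These coefficients lie in `[0, 1]`, which gives
`I - φ(I) ≥ 0`, and they tend to `0` pointwise, so `φ^k(I) x → 0` by dominated convergence
in `ℓ²`. -/

open scoped ENNReal Topology lp

section ell2

variable {ι : Type*}

theorem lp.tendsto_zero_of_tendsto_apply_of_norm_le {G : ι → Type*}
    [∀ i, NormedAddCommGroup (G i)] {p : ℝ≥0∞} [Fact (1 ≤ p)] (hp : 0 < p.toReal)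
    {α : Type*} {l : Filter α} {x : lp G p} {y : α → lp G p} (hle : ∀ k i, ‖y k i‖ ≤ ‖x i‖)
    (hlim : ∀ i, Tendsto (fun k => y k i) l (𝓝 0)) : Tendsto y l (𝓝 0) := by
  have hpow : Tendsto (fun k => ‖y k‖ ^ p.toReal) l (𝓝 0) := by
    simp_rw [lp.norm_rpow_eq_tsum hp]
    simpa using tendsto_tsum_of_dominated_convergence (g := fun _ => (0 : ℝ))
      ((lp.memℓp x).summable hp)
      (fun i => by
        simpa [Real.zero_rpow hp.ne'] using (hlim i).norm.rpow_const (Or.inr hp.le))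
      (Eventually.of_forall fun k i => by
        rw [Real.norm_of_nonneg (by positivity)]
        exact Real.rpow_le_rpow (norm_nonneg _) (hle k i) hp.le)
  rw [tendsto_zero_iff_norm_tendsto_zero]
  simpa [← Real.rpow_mul (norm_nonneg _), mul_inv_cancel₀ hp.ne',
    Real.zero_rpow (inv_ne_zero hp.ne')]
    using hpow.rpow_const (p := p.toReal⁻¹) (Or.inr (inv_nonneg.2 hp.le))

theorem lp.isPositive_of_apply_eq_mul {T : ℓ²(ι, ℂ) →L[ℂ] ℓ²(ι, ℂ)}
    {d : ι → ℝ} (hd : ∀ i, 0 ≤ d i) (hT : ∀ x i, T x i = d i * x i) : T.IsPositive := by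
  refine (ContinuousLinearMap.isPositive_iff_complex T).2 fun x => ?_
  have hterm (i : ι) : ⟪T x i, x i⟫_ℂ = ((d i * ‖x i‖ ^ 2 : ℝ) : ℂ) := by
    rw [hT, RCLike.inner_apply, map_mul, Complex.conj_ofReal, mul_left_comm, Complex.mul_conj']
    push_cast; rfl
  have hsum : HasSum (fun i => ((d i * ‖x i‖ ^ 2 : ℝ) : ℂ)) ⟪T x, x⟫_ℂ := by
    simpa only [hterm] using lp.hasSum_inner (𝕜 := ℂ) (T x) x
  rw [← hsum.tsum_eq, ← Complex.ofReal_tsum]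
  simpa using tsum_nonneg fun i => mul_nonneg (hd i) (sq_nonneg ‖x i‖)

variable [DecidableEq ι]

theorem lp.apply_eq_inner_single (y : ℓ²(ι, ℂ)) (i : ι) :
    y i = ⟪lp.single 2 i (1 : ℂ), y⟫_ℂ := by
  simp [lp.inner_single_left]

theorem lp.adjoint_apply_eq_inner_single
    (T : ℓ²(ι, ℂ) →L[ℂ] ℓ²(ι, ℂ)) (x : ℓ²(ι, ℂ)) (i : ι) :
    T.adjoint x i = ⟪T (lp.single 2 i 1), x⟫_ℂ := by
  rw [lp.apply_eq_inner_single, ContinuousLinearMap.adjoint_inner_right]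

end ell2

def rowCPMap (W : Fin n → (E →L[ℂ] E)) (X : E →L[ℂ] E) : E →L[ℂ] E :=
  ∑ i, W i ∘L X ∘L (W i).adjoint

theorem rowCPMap_one (W : Fin n → (E →L[ℂ] E)) :
    rowCPMap W 1 = ∑ i, W i ∘L (W i).adjoint := by
  simp [rowCPMap, ContinuousLinearMap.one_def, ContinuousLinearMap.id_comp]

-- For `c i β = √(b_β / b_{g_i β})` this is `b_{β.drop k} / b_β` when `k ≤ |β|`.
def shiftIterWeight (c : Fin n → Word n → ℝ) : ℕ → Word n → ℝ
  | 0, _ => 1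
  | _ + 1, [] => 0
  | k + 1, i :: β => c i β ^ 2 * shiftIterWeight c k β

def IsWeightedShift (W : Fin n → (FockK n ℂ →L[ℂ] FockK n ℂ))
    (c : Fin n → Word n → ℝ) : Prop :=
  ∀ i α, W i (lp.single 2 α 1) = (c i α : ℂ) • lp.single 2 (i :: α) 1

section WeightedShift

variable {c : Fin n → Word n → ℝ}

theorem shiftIterWeight_nonneg (k : ℕ) (β : Word n) : 0 ≤ shiftIterWeight c k β := by
  induction k generalizing β with
  | zero => exact zero_le_one
  | succ k ih =>
    cases β with
    | nil => exact le_rfl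
    | cons i β => exact mul_nonneg (sq_nonneg _) (ih β)

theorem shiftIterWeight_le_one (hc : ∀ i β, c i β ^ 2 ≤ 1) (k : ℕ) (β : Word n) :
    shiftIterWeight c k β ≤ 1 := by
  induction k generalizing β with
  | zero => exact le_rfl
  | succ k ih =>
    cases β with
    | nil => exact zero_le_one
    | cons i β => exact mul_le_one₀ (hc i β) (shiftIterWeight_nonneg k β) (ih β)

theorem shiftIterWeight_of_length_lt {k : ℕ} {β : Word n} (h : β.length < k) :
    shiftIterWeight c k β = 0 := by
  induction k generalizing β with
  | zero => omega
  | succ k ih =>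
    cases β with
    | nil => rfl
    | cons i β => simp [shiftIterWeight, ih (by simpa using h)]

namespace IsWeightedShift

variable {W : Fin n → (FockK n ℂ →L[ℂ] FockK n ℂ)}

theorem adjoint_apply (hW : IsWeightedShift W c) (i : Fin n) (x : FockK n ℂ) (β : Word n) :
    (W i).adjoint x β = c i β * x (i :: β) := by
  rw [lp.adjoint_apply_eq_inner_single, hW, inner_smul_left, ← lp.apply_eq_inner_single,
    Complex.conj_ofReal]

theorem adjoint_single_cons (hW : IsWeightedShift W c) (i : Fin n) (β : Word n) :
    (W i).adjoint (lp.single 2 (i :: β) 1) = (c i β : ℂ) • lp.single 2 β 1 := by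
  ext γ
  rw [hW.adjoint_apply, lp.coeFn_smul, Pi.smul_apply, lp.single_apply, lp.single_apply]
  by_cases h : γ = β <;> simp [h]

theorem adjoint_single_of_forall_ne (hW : IsWeightedShift W c) {i : Fin n} {γ : Word n}
    (hγ : ∀ β, γ ≠ i :: β) : (W i).adjoint (lp.single 2 γ 1) = 0 := by
  ext β
  rw [hW.adjoint_apply, lp.single_apply_ne _ _ _ (hγ β).symm, mul_zero]
  rfl

theorem apply_cons_self (hW : IsWeightedShift W c) (i : Fin n) (x : FockK n ℂ) (γ : Word n) :
    W i x (i :: γ) = c i γ * x γ := by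
  rw [lp.apply_eq_inner_single, ← ContinuousLinearMap.adjoint_inner_left,
    hW.adjoint_single_cons, inner_smul_left, ← lp.apply_eq_inner_single, Complex.conj_ofReal]

theorem apply_of_forall_ne (hW : IsWeightedShift W c) {i : Fin n} (x : FockK n ℂ) {γ : Word n}
    (hγ : ∀ β, γ ≠ i :: β) : W i x γ = 0 := by
  rw [lp.apply_eq_inner_single, ← ContinuousLinearMap.adjoint_inner_left,
    hW.adjoint_single_of_forall_ne hγ, inner_zero_left]

theorem iterate_rowCPMap_one_apply (hW : IsWeightedShift W c) (k : ℕ) (x : FockK n ℂ)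
    (β : Word n) : ((rowCPMap W)^[k] 1) x β = shiftIterWeight c k β * x β := by
  induction k generalizing x β with
  | zero => simp [shiftIterWeight]
  | succ k ih =>
    rw [Function.iterate_succ_apply', rowCPMap, sum_apply, lp.coeFn_sum, Finset.sum_apply]
    simp only [ContinuousLinearMap.comp_apply]
    cases β with
    | nil => simp [shiftIterWeight, hW.apply_of_forall_ne]
    | cons j γ =>
      rw [Finset.sum_eq_single_of_mem j (Finset.mem_univ j) fun i _ hij =>
          hW.apply_of_forall_ne _ fun β h => hij (List.cons.inj h).1.symm,
        hW.apply_cons_self, ih, hW.adjoint_apply, shiftIterWeight]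
      push_cast
      ring

theorem isPositive_one_sub_sum_comp_adjoint (hW : IsWeightedShift W c)
    (hc : ∀ i β, c i β ^ 2 ≤ 1) : (1 - ∑ i, W i ∘L (W i).adjoint).IsPositive := by
  refine lp.isPositive_of_apply_eq_mul (d := fun β => 1 - shiftIterWeight c 1 β)
    (fun β => sub_nonneg.2 (shiftIterWeight_le_one hc 1 β)) fun x β => ?_
  have hφ := hW.iterate_rowCPMap_one_apply 1 x β
  rw [Function.iterate_one, rowCPMap_one] at hφ
  rw [sub_apply, lp.coeFn_sub, Pi.sub_apply, hφ, one_apply_eq_self]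
  push_cast
  ring

theorem tendsto_iterate_rowCPMap_one_apply (hW : IsWeightedShift W c)
    (hc : ∀ i β, c i β ^ 2 ≤ 1) (x : FockK n ℂ) :
    Tendsto (fun k => ((rowCPMap W)^[k] 1) x) atTop (𝓝 0) := by
  refine lp.tendsto_zero_of_tendsto_apply_of_norm_le (by norm_num) (x := x) (fun k β => ?_)
    fun β => ?_
  · rw [hW.iterate_rowCPMap_one_apply, norm_mul, Complex.norm_real,
      Real.norm_of_nonneg (shiftIterWeight_nonneg k β)]
    exact mul_le_of_le_one_left (norm_nonneg _) (shiftIterWeight_le_one hc k β)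
  · refine tendsto_const_nhds.congr' ?_
    filter_upwards [eventually_gt_atTop β.length] with k hk
    rw [hW.iterate_rowCPMap_one_apply, shiftIterWeight_of_length_lt hk, Complex.ofReal_zero,
      zero_mul]

end IsWeightedShift

end WeightedShift

theorem weighted_creation_row_contraction_pure_general
    {n : ℕ} (b : Word n → ℝ)
    (hratio : ∀ (i : Fin n) (α : Word n), b α / b (i :: α) ≤ 1)
    (W : Fin n → (FockK n ℂ →L[ℂ] FockK n ℂ))
    (hW : ∀ (i : Fin n) (α : Word n),
      W i (lp.single 2 α (1 : ℂ)) =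
        ((Real.sqrt (b α / b (i :: α)) : ℝ) : ℂ) • lp.single 2 (i :: α) (1 : ℂ)) :
    (1 - ∑ i : Fin n, W i ∘L (W i).adjoint).IsPositive ∧
    ∀ x : FockK n ℂ,
      Tendsto
        (fun k : ℕ =>
          ((fun X : FockK n ℂ →L[ℂ] FockK n ℂ =>
              ∑ i : Fin n, W i ∘L X ∘L (W i).adjoint)^[k] 1) x)
        atTop (nhds 0) := by
  have hc (i : Fin n) (α : Word n) : Real.sqrt (b α / b (i :: α)) ^ 2 ≤ 1 :=
    pow_le_one₀ (Real.sqrt_nonneg _) (Real.sqrt_le_one.2 (hratio i α))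
  have hshift : IsWeightedShift W fun i α => Real.sqrt (b α / b (i :: α)) := hW
  exact ⟨hshift.isPositive_one_sub_sum_comp_adjoint hc,
    hshift.tendsto_iterate_rowCPMap_one_apply hc⟩

/-- If `b_α / b_{g_i α} ≤ 1` for all `i, α`, then the weighted left creation
operators form a row contraction, `∑ W_i W_i* ≤ I`, and the completely positive map
`φ(X) = ∑ W_i X W_i*` satisfies `φ^k(I) → 0` in the strong operator topology. -/
theorem weighted_creation_row_contraction_pure
    {n : ℕ} (b : Word n → ℝ) (hb : ∀ α, 0 < b α) (hb0 : b ([] : Word n) = 1)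
    (hratio : ∀ (i : Fin n) (α : Word n), b α / b (i :: α) ≤ 1)
    (W : Fin n → (FockK n ℂ →L[ℂ] FockK n ℂ))
    (hW : ∀ (i : Fin n) (α : Word n),
      W i (lp.single 2 α (1 : ℂ)) =
        ((Real.sqrt (b α / b (i :: α)) : ℝ) : ℂ) • lp.single 2 (i :: α) (1 : ℂ)) :
    (1 - ∑ i : Fin n, W i ∘L (W i).adjoint).IsPositive ∧
    ∀ x : FockK n ℂ,
      Tendsto
        (fun k : ℕ =>
          ((fun X : FockK n ℂ →L[ℂ] FockK n ℂ =>
              ∑ i : Fin n, W i ∘L X ∘L (W i).adjoint)^[k] 1) x)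
        atTop (nhds 0) :=
  weighted_creation_row_contraction_pure_general b hratio W hW

end
end

section
/- Let T = (T_1,...,T_n) be a pure n-tuple in the admissible noncommutative domain D_{g^{-1}}(H). Then the noncommutative Berezin kernel K_{g,T}: H → F^2(H_n) ⊗ D, defined by K_{g,T} h = Σ_α sqrt(b_α) e_α ⊗ Δ_{g^{-1}}(T,T*)^{1/2} T_α* h with D = closure of range of Δ_{g^{-1}}(T,T*), is an isometry satisfying K_{g,T} T_i* = (W_i* ⊗ I_D) K_{g,T} for each i. -/
/-! The coordinate of `K_{g,T} h` at `α` has squared norm `b_α ⟪T_α Δ T_α* h, h⟫`, so purity of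
`T` says exactly that these squared norms sum to `‖h‖²`. For the intertwining relation, `W_i*`
moves the coordinate at `iα` back to `α` with weight `√(b_α / b_{iα})`, and
`T_{iα}* = T_α* T_i*` matches this with the coordinate of `K_{g,T} T_i* h` at `α`. -/

open scoped InnerProductSpace
open Filter

noncomputable section

variable {n : ℕ} {E : Type*} [NormedAddCommGroup E] [InnerProductSpace ℂ E] [CompleteSpace E]

section

variable {H K : Type*} [NormedAddCommGroup H] [InnerProductSpace ℂ H]
  [NormedAddCommGroup K] [InnerProductSpace ℂ K]

theorem mem_wordsLen {p : ℕ} {α : Word n} : α ∈ wordsLen n p ↔ α.length = p := by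
  constructor
  · intro h
    obtain ⟨v, -, rfl⟩ := Finset.mem_image.mp h
    exact v.toList_length
  · intro h
    exact Finset.mem_image.mpr ⟨⟨α, h⟩, Finset.mem_univ _, rfl⟩

theorem HasSum.tendsto_sum_wordsLen {M : Type*} [AddCommMonoid M] [TopologicalSpace M]
    {f : Word n → M} {s : M} (hf : HasSum f s) :
    Tendsto (fun N => ∑ p ∈ Finset.range N, ∑ α ∈ wordsLen n p, f α) atTop (nhds s) := by
  have hdisj : ∀ N, (↑(Finset.range N) : Set ℕ).PairwiseDisjoint (wordsLen n) :=
    fun N p _ q _ hpq => Finset.disjoint_left.mpr fun α hp hq =>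
      hpq ((mem_wordsLen.mp hp).symm.trans (mem_wordsLen.mp hq))
  have hexhaust : Tendsto (fun N => (Finset.range N).biUnion (wordsLen n)) atTop atTop := by
    refine tendsto_atTop_atTop.mpr fun s => ⟨s.sup List.length + 1, fun N hN α hα => ?_⟩
    refine Finset.mem_biUnion.mpr ⟨α.length, Finset.mem_range.mpr ?_, mem_wordsLen.mpr rfl⟩
    exact (Finset.le_sup hα).trans_lt hN
  simp only [← Finset.sum_biUnion (hdisj _)]
  exact hf.comp hexhaust

theorem adjoint_wordOp_cons_apply [CompleteSpace H] (X : Fin n → (H →L[ℂ] H)) (i : Fin n)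
    (α : Word n) (h : H) :
    (wordOp X (i :: α)).adjoint h = (wordOp X α).adjoint ((X i).adjoint h) := by
  have hcons : wordOp X (i :: α) = X i ∘L wordOp X α := by
    simp only [wordOp, List.map_cons, List.prod_cons]
    rfl
  rw [hcons, ContinuousLinearMap.adjoint_comp]
  rfl

theorem inner_map_adjoint_self_of_mul_self_eq [CompleteSpace H] [CompleteSpace K]
    (A : K →L[ℂ] H) {R Δ : K →L[ℂ] K} (hR : IsSelfAdjoint R) (hRΔ : R ∘L R = Δ) (h : H) :
    ⟪R (A.adjoint h), R (A.adjoint h)⟫_ℂ = ⟪(A ∘L Δ ∘L A.adjoint) h, h⟫_ℂ := by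
  calc ⟪R (A.adjoint h), R (A.adjoint h)⟫_ℂ
      = ⟪R.adjoint (R (A.adjoint h)), A.adjoint h⟫_ℂ := (R.adjoint_inner_left _ _).symm
    _ = ⟪Δ (A.adjoint h), A.adjoint h⟫_ℂ := by rw [hR.adjoint_eq, ← hRΔ]; rfl
    _ = ⟪(A ∘L Δ ∘L A.adjoint) h, h⟫_ℂ := A.adjoint_inner_right _ _

theorem FockK.adjoint_apply_of_map_single [CompleteSpace K]
    {V : FockK n K →L[ℂ] FockK n K} {c : Word n → ℝ} {σ : Word n → Word n}
    (hV : ∀ α k, V (lp.single 2 α k) = (c α : ℂ) • lp.single 2 (σ α) k)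
    (f : FockK n K) (α : Word n) :
    (V.adjoint f : ∀ _ : Word n, K) α = (c α : ℂ) • (f : ∀ _ : Word n, K) (σ α) := by
  refine ext_inner_left ℂ fun k => ?_
  calc ⟪k, (V.adjoint f : ∀ _ : Word n, K) α⟫_ℂ
      = ⟪lp.single 2 α k, V.adjoint f⟫_ℂ :=
        (lp.inner_single_left (G := fun _ : Word n => K) α k _).symm
    _ = ⟪V (lp.single 2 α k), f⟫_ℂ := V.adjoint_inner_right _ _
    _ = (c α : ℂ) * ⟪k, (f : ∀ _ : Word n, K) (σ α)⟫_ℂ := by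
      rw [hV, inner_smul_left, Complex.conj_ofReal, lp.inner_single_left (𝕜 := ℂ)]
    _ = ⟪k, (c α : ℂ) • (f : ∀ _ : Word n, K) (σ α)⟫_ℂ := (inner_smul_right _ _ _).symm

theorem FockK.norm_apply_eq_of_inner_apply_eq (B : H → FockK n K) (P : Word n → (H →L[ℂ] H))
    (hB : ∀ h α, ⟪(B h : ∀ _ : Word n, K) α, (B h : ∀ _ : Word n, K) α⟫_ℂ = ⟪P α h, h⟫_ℂ)
    (hP : ∀ h, Tendsto (fun N => (∑ p ∈ Finset.range N, ∑ α ∈ wordsLen n p, P α) h)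
      atTop (nhds h))
    (h : H) : ‖B h‖ = ‖h‖ := by
  have hinner : ⟪B h, B h⟫_ℂ = ⟪h, h⟫_ℂ := by
    refine tendsto_nhds_unique (lp.hasSum_inner (B h) (B h)).tendsto_sum_wordsLen ?_
    simpa only [hB, sum_apply, sum_inner] using (hP h).inner tendsto_const_nhds
  rw [inner_self_eq_norm_sq_to_K, inner_self_eq_norm_sq_to_K] at hinner
  exact (sq_eq_sq₀ (norm_nonneg _) (norm_nonneg _)).mp (by exact_mod_cast hinner)

end

theorem berezin_kernel_isometry_intertwines_general
    {n : ℕ} {H : Type*} [NormedAddCommGroup H] [InnerProductSpace ℂ H] [CompleteSpace H]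
    (b : Word n → ℝ) (hb : ∀ α, 0 < b α)
    (T : Fin n → (H →L[ℂ] H)) (Δ : H →L[ℂ] H)
    (hpure : ∀ x : H,
      Tendsto (fun N : ℕ =>
          (∑ p ∈ Finset.range N, ∑ α ∈ wordsLen n p,
            ((b α : ℝ) : ℂ) • (wordOp T α ∘L Δ ∘L (wordOp T α).adjoint)) x)
        atTop (nhds x))
    (R : H →L[ℂ] H) (hRpos : R.IsPositive) (hR : R ∘L R = Δ)
    (W : Fin n → (FockK n H →L[ℂ] FockK n H))
    (hW : ∀ (i : Fin n) (α : Word n) (k : H),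
      W i (lp.single 2 α k) =
        ((Real.sqrt (b α / b (i :: α)) : ℝ) : ℂ) • lp.single 2 (i :: α) k)
    (Kb : H →L[ℂ] FockK n H)
    (hKb : ∀ (h : H) (α : Word n),
      (Kb h : ∀ _ : Word n, H) α =
        ((Real.sqrt (b α) : ℝ) : ℂ) • R ((wordOp T α).adjoint h)) :
    (∀ h : H, ‖Kb h‖ = ‖h‖) ∧
    ∀ i : Fin n, Kb ∘L (T i).adjoint = (W i).adjoint ∘L Kb := by
  have hcoord : ∀ h α, ⟪(Kb h : ∀ _ : Word n, H) α, (Kb h : ∀ _ : Word n, H) α⟫_ℂ =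
      ⟪(((b α : ℝ) : ℂ) • (wordOp T α ∘L Δ ∘L (wordOp T α).adjoint)) h, h⟫_ℂ := by
    intro h α
    rw [hKb, inner_smul_left, inner_smul_right, Complex.conj_ofReal, ← mul_assoc,
      ← Complex.ofReal_mul, Real.mul_self_sqrt (hb α).le,
      inner_map_adjoint_self_of_mul_self_eq _ hRpos.isSelfAdjoint hR,
      smul_apply, inner_smul_left, Complex.conj_ofReal]
  refine ⟨FockK.norm_apply_eq_of_inner_apply_eq Kb _ hcoord hpure, fun i => ?_⟩
  ext h α
  have hweight : √(b α / b (i :: α)) * √(b (i :: α)) = √(b α) := by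
    rw [← Real.sqrt_mul' _ (hb _).le, div_mul_cancel₀ _ (hb _).ne']
  rw [ContinuousLinearMap.comp_apply, ContinuousLinearMap.comp_apply, hKb,
    FockK.adjoint_apply_of_map_single (c := fun β => √(b β / b (i :: β))) (σ := (i :: ·)) (hW i),
    hKb, adjoint_wordOp_cons_apply, smul_smul, ← Complex.ofReal_mul, hweight]

/-- If `T` is a pure `n`-tuple in the admissible noncommutative domain
`D_{g⁻¹}(H)` (i.e. `Δ := Δ_{g⁻¹}(T,T*)` exists as a WOT limit and is positive, and
`∑_α b_α T_α Δ T_α* = I`), then the noncommutative Berezin kernel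
`K_{g,T} h = ∑_α √b_α e_α ⊗ Δ^{1/2} T_α* h` is an isometry satisfying
`K_{g,T} T_i* = (W_i* ⊗ I) K_{g,T}` for each `i`. -/
theorem berezin_kernel_isometry_intertwines
    {n : ℕ} {H : Type*} [NormedAddCommGroup H] [InnerProductSpace ℂ H] [CompleteSpace H]
    (b a : Word n → ℝ) (hb : ∀ α, 0 < b α) (hb0 : b ([] : Word n) = 1)
    (ha0 : a ([] : Word n) = 1)
    (hbd : ∃ C : ℝ, ∀ (i : Fin n) (α : Word n), b α / b (i :: α) ≤ C)
    (T : Fin n → (H →L[ℂ] H)) (Δ : H →L[ℂ] H) (hΔpos : Δ.IsPositive)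
    (hΔ : ∀ x y : H,
      Tendsto (fun N : ℕ => (⟪deltaPartial a T N x, y⟫_ℂ : ℂ)) atTop (nhds ⟪Δ x, y⟫_ℂ))
    (hpure : ∀ x : H,
      Tendsto (fun N : ℕ =>
          (∑ p ∈ Finset.range N, ∑ α ∈ wordsLen n p,
            ((b α : ℝ) : ℂ) • (wordOp T α ∘L Δ ∘L (wordOp T α).adjoint)) x)
        atTop (nhds x))
    (R : H →L[ℂ] H) (hRpos : R.IsPositive) (hR : R ∘L R = Δ)
    (W : Fin n → (FockK n H →L[ℂ] FockK n H))
    (hW : ∀ (i : Fin n) (α : Word n) (k : H),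
      W i (lp.single 2 α k) =
        ((Real.sqrt (b α / b (i :: α)) : ℝ) : ℂ) • lp.single 2 (i :: α) k)
    (Kb : H →L[ℂ] FockK n H)
    (hKb : ∀ (h : H) (α : Word n),
      (Kb h : ∀ _ : Word n, H) α =
        ((Real.sqrt (b α) : ℝ) : ℂ) • R ((wordOp T α).adjoint h)) :
    (∀ h : H, ‖Kb h‖ = ‖h‖) ∧
    ∀ i : Fin n, Kb ∘L (T i).adjoint = (W i).adjoint ∘L Kb :=
  berezin_kernel_isometry_intertwines_general b hb T Δ hpure R hRpos hR W hW Kb hKb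
end
end

section
/- Let T ∈ D_{g^{-1}}(H) be pure and suppose T_i* = (W_i* ⊗ I_G)|_H where H is co-invariant in F^2(H_n) ⊗ G. Then dim closure(Δ_{g^{-1}}(T,T*) H) ≤ dim G, and if the dilation is minimal (the closed span of (W_α ⊗ I_G)H is all of F^2(H_n) ⊗ G), then dim closure(Δ_{g^{-1}}(T,T*) H) = dim G. -/
/-!
The universal model has defect `Δ(W, W*) = P_∅ ⊗ I_G`, the projection onto the vacuum
coefficient, and `T_α* = W_α*|_H` for every word `α`. Compressing therefore gives
`Δ(T, T*) = A* A` with `A = P_∅|_H : H → G`. The polar-decomposition map `|A| x ↦ A x` is an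
isometry from `closure(range |A|) = closure(range Δ(T, T*))` into `G` whose range contains
`A H`. Under minimality `A H` is dense in `G`: if `g ⊥ A H`, then `e_∅ ⊗ g` is orthogonal to
`H` and to every `W_α H` with `α ≠ ∅` (the `W_i` have no vacuum component), hence to a dense
set, so `g = 0`. The closed range of the isometry is then all of `G`.
-/

open scoped InnerProductSpace
open Filter

noncomputable section

variable {n : ℕ} {E : Type*} [NormedAddCommGroup E] [InnerProductSpace ℂ E] [CompleteSpace E]

namespace LinearMap
variable {𝕜 V K G : Type*} [NontriviallyNormedField 𝕜] [AddCommGroup V] [Module 𝕜 V]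
  [NormedAddCommGroup K] [NormedSpace 𝕜 K] [NormedAddCommGroup G] [NormedSpace 𝕜 G]
  [CompleteSpace G]

theorem exists_linearIsometry_of_norm_eq (A : V →ₗ[𝕜] G) (B : V →ₗ[𝕜] K)
    (hAB : ∀ x, ‖A x‖ = ‖B x‖) :
    ∃ Φ : (range B).topologicalClosure →ₗᵢ[𝕜] G,
      ∀ x, Φ ⟨B x, (range B).le_topologicalClosure (mem_range_self B x)⟩ = A x := by
  let e : V →ₗ[𝕜] (range B).topologicalClosure :=
    B.codRestrict _ fun x => (range B).le_topologicalClosure (mem_range_self B x)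
  have he : DenseRange e := by
    rw [DenseRange, Subtype.dense_iff, ← Set.range_comp]
    exact (Submodule.topologicalClosure_coe (range B)).subset
  have hΦ : ∀ x, A.extendOfNorm e (e x) = A x :=
    extendOfNorm_eq he ⟨1, fun x => (one_mul ‖e x‖).symm ▸ (hAB x).le⟩
  refine ⟨⟨(A.extendOfNorm e).toLinearMap, fun y => ?_⟩, hΦ⟩
  refine he.induction_on y (isClosed_eq (by fun_prop) (by fun_prop)) fun x => ?_
  simp only [ContinuousLinearMap.coe_coe, hΦ, hAB]
  rfl

end LinearMap

theorem ContinuousLinearMap.topologicalClosure_range_of_isSelfAdjoint {𝕜 H : Type*} [RCLike 𝕜]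
    [NormedAddCommGroup H] [InnerProductSpace 𝕜 H] [CompleteSpace H] {T : H →L[𝕜] H}
    (hT : IsSelfAdjoint T) : T.range.topologicalClosure = T.kerᗮ := by
  rw [orthogonal_ker, hT.adjoint_eq]

namespace ContinuousLinearMap
variable {H G : Type*} [NormedAddCommGroup H] [InnerProductSpace ℂ H] [CompleteSpace H]
  [NormedAddCommGroup G] [InnerProductSpace ℂ G] [CompleteSpace G]

theorem norm_sqrt_adjoint_comp_self_apply (A : H →L[ℂ] G) (x : H) :
    ‖CFC.sqrt (A.adjoint ∘L A) x‖ = ‖A x‖ := by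
  have hD : 0 ≤ A.adjoint ∘L A := (nonneg_iff_isPositive _).mpr (isPositive_adjoint_comp_self A)
  have hS : IsSelfAdjoint (CFC.sqrt (A.adjoint ∘L A)) := .of_nonneg (CFC.sqrt_nonneg _)
  rw [apply_norm_eq_sqrt_inner_adjoint_left, hS.adjoint_eq, ← mul_def,
    CFC.sqrt_mul_sqrt_self _ hD, apply_norm_eq_sqrt_inner_adjoint_left A]

theorem topologicalClosure_range_sqrt_adjoint_comp_self (A : H →L[ℂ] G) :
    (CFC.sqrt (A.adjoint ∘L A)).range.topologicalClosure =
      (A.adjoint ∘L A).range.topologicalClosure := by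
  have hS : IsSelfAdjoint (CFC.sqrt (A.adjoint ∘L A)) := .of_nonneg (CFC.sqrt_nonneg _)
  have hker : (CFC.sqrt (A.adjoint ∘L A)).ker = A.ker := by
    ext x
    rw [LinearMap.mem_ker, LinearMap.mem_ker, coe_coe, coe_coe, ← norm_eq_zero,
      norm_sqrt_adjoint_comp_self_apply, norm_eq_zero]
  rw [topologicalClosure_range_of_isSelfAdjoint hS,
    topologicalClosure_range_of_isSelfAdjoint (isPositive_adjoint_comp_self A).isSelfAdjoint,
    ker_adjoint_comp_self, hker]

theorem exists_linearIsometry_topologicalClosure_range_adjoint_comp_self (A : H →L[ℂ] G) :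
    ∃ Φ : (A.adjoint ∘L A).range.topologicalClosure →ₗᵢ[ℂ] G, Set.range A ⊆ Set.range Φ := by
  obtain ⟨Φ, hΦ⟩ := LinearMap.exists_linearIsometry_of_norm_eq A.toLinearMap
    (CFC.sqrt (A.adjoint ∘L A)).toLinearMap fun x => (norm_sqrt_adjoint_comp_self_apply A x).symm
  rw [← topologicalClosure_range_sqrt_adjoint_comp_self]
  exact ⟨Φ, fun _ ⟨x, hx⟩ => ⟨_, (hΦ x).trans hx⟩⟩

end ContinuousLinearMap

omit [CompleteSpace E] in
@[simp] lemma wordOp_nil (X : Fin n → (E →L[ℂ] E)) : wordOp X [] = 1 := rfl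

omit [CompleteSpace E] in
@[simp] lemma wordOp_cons (X : Fin n → (E →L[ℂ] E)) (i : Fin n) (α : Word n) :
    wordOp X (i :: α) = X i ∘L wordOp X α := rfl

section Compression
variable {H : Submodule ℂ E} [CompleteSpace H] {T : Fin n → (H →L[ℂ] H)}
  {W : Fin n → (E →L[ℂ] E)}

theorem coe_adjoint_wordOp_of_compression
    (hT : ∀ i (h : H), ((T i).adjoint h : E) = (W i).adjoint h) (α : Word n) (h : H) :
    ((wordOp T α).adjoint h : E) = (wordOp W α).adjoint h := by
  induction α generalizing h with
  | nil => simp [ContinuousLinearMap.adjoint_one]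
  | cons i α ih => simp [ContinuousLinearMap.adjoint_comp, ih, hT]

theorem inner_deltaPartial_of_compression
    (hT : ∀ i (h : H), ((T i).adjoint h : E) = (W i).adjoint h) (a : Word n → ℝ) (N : ℕ)
    (x y : H) : ⟪deltaPartial a T N x, y⟫_ℂ = ⟪deltaPartial a W N x, (y : E)⟫_ℂ := by
  simp only [deltaPartial, sum_apply, smul_apply, ContinuousLinearMap.comp_apply, sum_inner,
    inner_smul_left, ← ContinuousLinearMap.adjoint_inner_right (wordOp _ _)]
  simp [coe_adjoint_wordOp_of_compression hT]

end Compression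

section Fock
variable {G : Type*} [NormedAddCommGroup G] [InnerProductSpace ℂ G]

variable (n G) in
def vacuumCoeff : FockK n G →L[ℂ] G := lp.evalCLM ℂ (fun _ : Word n => G) 2 []

@[simp] lemma vacuumCoeff_apply (x : FockK n G) : vacuumCoeff n G x = x [] := rfl

theorem apply_nil_eq_zero_of_apply_single (W : FockK n G →L[ℂ] FockK n G)
    (hW : ∀ α k, W (lp.single 2 α k) [] = 0) (x : FockK n G) : W x [] = 0 := by
  have : vacuumCoeff n G ∘L W = 0 :=
    lp.ext_continuousLinearMap ENNReal.ofNat_ne_top fun α => by ext k; exact hW α k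
  exact congr($this x)

variable [CompleteSpace G]

theorem defect_compression_eq_adjoint_comp_self {a : Word n → ℝ}
    {W : Fin n → (FockK n G →L[ℂ] FockK n G)}
    (hDelta : ∀ x : FockK n G,
      Tendsto (fun N => deltaPartial a W N x) atTop (nhds (lp.single 2 [] (x []))))
    {H : Submodule ℂ (FockK n G)} [CompleteSpace H] {T : Fin n → (H →L[ℂ] H)}
    (hT : ∀ i (h : H), ((T i).adjoint h : FockK n G) = (W i).adjoint h) {ΔT : H →L[ℂ] H}
    (hΔT : ∀ x y : H, Tendsto (fun N => ⟪deltaPartial a T N x, y⟫_ℂ) atTop (nhds ⟪ΔT x, y⟫_ℂ)) :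
    ΔT = (vacuumCoeff n G ∘L H.subtypeL).adjoint ∘L (vacuumCoeff n G ∘L H.subtypeL) := by
  ext1 x
  refine ext_inner_right ℂ fun y => tendsto_nhds_unique (hΔT x y) ?_
  rw [ContinuousLinearMap.comp_apply, ContinuousLinearMap.adjoint_inner_left]
  simpa [inner_deltaPartial_of_compression hT, lp.inner_single_left] using
    (hDelta x).inner (𝕜 := ℂ) (tendsto_const_nhds (x := (y : FockK n G)))

theorem denseRange_vacuumCoeff_comp_subtypeL {W : Fin n → (FockK n G →L[ℂ] FockK n G)}
    (hW : ∀ i x, W i x [] = 0) {H : Submodule ℂ (FockK n G)}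
    (hmin : closure (Submodule.span ℂ (⋃ α, wordOp W α '' H) : Set (FockK n G)) = Set.univ) :
    DenseRange (vacuumCoeff n G ∘L H.subtypeL) := by
  change Dense ((vacuumCoeff n G ∘L H.subtypeL).range : Set G)
  rw [Submodule.dense_iff_topologicalClosure_eq_top, Submodule.topologicalClosure_eq_top_iff,
    Submodule.eq_bot_iff]
  intro g hg
  set u : FockK n G := lp.single 2 [] g
  have hspan : Submodule.span ℂ (⋃ α, wordOp W α '' H) ≤ (ℂ ∙ u)ᗮ := by
    refine Submodule.span_le.mpr ?_
    rintro _ ⟨_, ⟨α, rfl⟩, h, hh, rfl⟩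
    rw [SetLike.mem_coe, Submodule.mem_orthogonal_singleton_iff_inner_left, lp.inner_single_right]
    cases α with
    | nil =>
      exact Submodule.inner_right_of_mem_orthogonal (LinearMap.mem_range_self _ (⟨h, hh⟩ : H)) hg
    | cons i β => simp [hW]
  have hu : u = 0 := (dense_iff_closure_eq.mpr hmin).eq_zero_of_inner_right ℂ
    fun v hv => Submodule.mem_orthogonal_singleton_iff_inner_left.mp (hspan hv)
  simpa [u] using congr($hu [])

end Fock

/-- `dim closure(Δ H) ≤ dim G` is expressed by a linear isometric embedding of
`closure(range ΔT)` into `G`, and equality by a linear isometric isomorphism. -/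
theorem dilation_index_bound_and_minimal_general
    {n : ℕ} {G : Type*} [NormedAddCommGroup G] [InnerProductSpace ℂ G] [CompleteSpace G]
    (b a : Word n → ℝ)
    (W : Fin n → (FockK n G →L[ℂ] FockK n G))
    (hW : ∀ (i : Fin n) (α : Word n) (k : G),
      W i (lp.single 2 α k) =
        ((Real.sqrt (b α / b (i :: α)) : ℝ) : ℂ) • lp.single 2 (i :: α) k)
    (hDelta : ∀ x : FockK n G,
      Tendsto (fun N : ℕ => deltaPartial a W N x) atTop
        (nhds (lp.single 2 ([] : Word n) ((x : ∀ _ : Word n, G) []))))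
    (H : Submodule ℂ (FockK n G)) [CompleteSpace H]
    (T : Fin n → (H →L[ℂ] H))
    (hT : ∀ (i : Fin n) (h : H), ((T i).adjoint h : FockK n G) = (W i).adjoint (h : FockK n G))
    (ΔT : H →L[ℂ] H)
    (hΔT : ∀ x y : H,
      Tendsto (fun N : ℕ => (⟪deltaPartial a T N x, y⟫_ℂ : ℂ)) atTop (nhds ⟪ΔT x, y⟫_ℂ)) :
    Nonempty (↥(LinearMap.range (ΔT : H →ₗ[ℂ] H)).topologicalClosure →ₗᵢ[ℂ] G) ∧
    (closure (↑(Submodule.span ℂ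
        (⋃ α : Word n, wordOp W α '' (H : Set (FockK n G)))) : Set (FockK n G)) = Set.univ →
      Nonempty (↥(LinearMap.range (ΔT : H →ₗ[ℂ] H)).topologicalClosure ≃ₗᵢ[ℂ] G)) := by
  set A := vacuumCoeff n G ∘L H.subtypeL
  rw [defect_compression_eq_adjoint_comp_self hDelta hT hΔT]
  obtain ⟨Φ, hAΦ⟩ := A.exists_linearIsometry_topologicalClosure_range_adjoint_comp_self
  refine ⟨⟨Φ⟩, fun hmin => ⟨LinearIsometryEquiv.ofSurjective Φ ?_⟩⟩
  have hcreation : ∀ i x, W i x [] = 0 := fun i =>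
    apply_nil_eq_zero_of_apply_single (W i) fun α k => by
      rw [hW, lp.coeFn_smul, Pi.smul_apply, lp.single_apply_ne _ _ _ (List.cons_ne_nil i α).symm,
        smul_zero]
  have hΦdense : DenseRange Φ := (denseRange_vacuumCoeff_comp_subtypeL hcreation hmin).mono hAΦ
  have hΦclosed : IsClosed (Set.range Φ) := Φ.isometry.isClosedEmbedding.isClosed_range
  exact Set.range_eq_univ.mp (hΦclosed.closure_eq ▸ hΦdense.closure_range)

/-- Let `T` be the pure `n`-tuple obtained by compressing the universal model
`W ⊗ I_G` to a co-invariant subspace `H ⊆ F²(H_n) ⊗ G` (so `T_i* = (W_i* ⊗ I_G)|_H`), and let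
`Δ = Δ_{g⁻¹}(T,T*)`. Then `dim closure(Δ H) ≤ dim G` (there is a linear isometric embedding of
`closure(range Δ)` into `G`), and if the dilation is minimal (the closed span of
`(W_α ⊗ I_G) H` is everything) then `dim closure(Δ H) = dim G` (there is a linear isometric
isomorphism). -/
theorem dilation_index_bound_and_minimal
    {n : ℕ} {G : Type*} [NormedAddCommGroup G] [InnerProductSpace ℂ G] [CompleteSpace G]
    (b a : Word n → ℝ) (hb : ∀ α, 0 < b α) (hb0 : b ([] : Word n) = 1)
    (ha0 : a ([] : Word n) = 1)
    (hbd : ∃ C : ℝ, ∀ (i : Fin n) (α : Word n), b α / b (i :: α) ≤ C)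
    (W : Fin n → (FockK n G →L[ℂ] FockK n G))
    (hW : ∀ (i : Fin n) (α : Word n) (k : G),
      W i (lp.single 2 α k) =
        ((Real.sqrt (b α / b (i :: α)) : ℝ) : ℂ) • lp.single 2 (i :: α) k)
    (hDelta : ∀ x : FockK n G,
      Tendsto (fun N : ℕ => deltaPartial a W N x) atTop
        (nhds (lp.single 2 ([] : Word n) ((x : ∀ _ : Word n, G) []))))
    (H : Submodule ℂ (FockK n G)) (hHcl : IsClosed (H : Set (FockK n G))) [CompleteSpace H]
    (hco : ∀ i : Fin n, ∀ x ∈ H, (W i).adjoint x ∈ H)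
    (T : Fin n → (H →L[ℂ] H))
    (hT : ∀ (i : Fin n) (h : H), ((T i).adjoint h : FockK n G) = (W i).adjoint (h : FockK n G))
    (ΔT : H →L[ℂ] H)
    (hΔT : ∀ x y : H,
      Tendsto (fun N : ℕ => (⟪deltaPartial a T N x, y⟫_ℂ : ℂ)) atTop (nhds ⟪ΔT x, y⟫_ℂ)) :
    Nonempty (↥(LinearMap.range (ΔT : H →ₗ[ℂ] H)).topologicalClosure →ₗᵢ[ℂ] G) ∧
    (closure (↑(Submodule.span ℂ
        (⋃ α : Word n, wordOp W α '' (H : Set (FockK n G)))) : Set (FockK n G)) = Set.univ →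
      Nonempty (↥(LinearMap.range (ΔT : H →ₗ[ℂ] H)).topologicalClosure ≃ₗᵢ[ℂ] G)) :=
  dilation_index_bound_and_minimal_general b a W hW hDelta H T hT ΔT hΔT
end
end
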